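/- arXiv:1102.4176 — 9 statements merged into one kernel-verified Lean document; each statement's English description precedes it below -/
import Mathlib

section
/- If a contract satisfies the incentive compatibility constraints, then for any two contract items (p_i,t_i) and (p_j,t_j), p_i > p_j if and only if t_i > t_j. -/
/-!
Subtracting the two IC constraints between types `i` and `j` sandwiches the difference in
power between the differences in valuation: `θ j (t i - t j) ≤ p i - p j ≤ θ i (t i - t j)`.
As both types are positive, `p i - p j` and `t i - t j` are therefore positive together.
-/

section IncentiveCompatibility

variable {θ pa pb ta tb : ℝ}

theorem time_lt_of_power_lt_of_prefers (hθ : 0 ≤ θ) (hpref : θ * tb - pb ≤ θ * ta - pa)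
    (hp : pb < pa) : tb < ta := by
  have hpos : 0 < θ * (ta - tb) := by linarith
  exact sub_pos.mp (pos_of_mul_pos_right hpos hθ)

theorem power_lt_of_time_lt_of_prefers (hθ : 0 < θ) (hpref : θ * ta - pa ≤ θ * tb - pb)
    (ht : tb < ta) : pb < pa := by
  have hpos : 0 < θ * (ta - tb) := mul_pos hθ (sub_pos.mpr ht)
  linarith

end IncentiveCompatibility

theorem ic_power_time_order_general
    (K : ℕ) (θ p t : ℕ → ℝ)
    (hθpos : ∀ k, 1 ≤ k → k ≤ K → 0 < θ k)
    (hIC : ∀ k j, 1 ≤ k → k ≤ K → 1 ≤ j → j ≤ K →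
      θ k * t k - p k ≥ θ k * t j - p j) :
    ∀ i j, 1 ≤ i → i ≤ K → 1 ≤ j → j ≤ K → (p i > p j ↔ t i > t j) := by
  intro i j hi hiK hj hjK
  exact ⟨time_lt_of_power_lt_of_prefers (hθpos i hi hiK).le (hIC i j hi hiK hj hjK),
    power_lt_of_time_lt_of_prefers (hθpos j hj hjK) (hIC j i hj hjK hi hiK)⟩

/-- If a contract satisfies the incentive compatibility constraints, then for any two
contract items `(p i, t i)` and `(p j, t j)`, `p i > p j` if and only if `t i > t j`. -/
theorem ic_power_time_order
    (K : ℕ) (hK : 1 ≤ K) (θ p t : ℕ → ℝ)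
    (hθpos : ∀ k, 1 ≤ k → k ≤ K → 0 < θ k)
    (hθmono : ∀ i j, 1 ≤ i → i < j → j ≤ K → θ i < θ j)
    (hp : ∀ k, 1 ≤ k → k ≤ K → 0 ≤ p k)
    (ht : ∀ k, 1 ≤ k → k ≤ K → 0 ≤ t k)
    (hIC : ∀ k j, 1 ≤ k → k ≤ K → 1 ≤ j → j ≤ K →
      θ k * t k - p k ≥ θ k * t j - p j) :
    ∀ i j, 1 ≤ i → i ≤ K → 1 ≤ j → j ≤ K → (p i > p j ↔ t i > t j) :=
  ic_power_time_order_general K θ p t hθpos hIC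
end

section
/- If a contract satisfies the incentive compatibility constraints, then p_i = p_j if and only if t_i = t_j, for any two contract items (p_i,t_i) and (p_j,t_j). -/
section IncentiveCompatiblePair

variable {α : Type*} [CommRing α] [LinearOrder α] [IsStrictOrderedRing α]
  {θ₁ θ₂ p₁ p₂ t₁ t₂ : α}

theorem ic_pair_price_eq_iff_time_eq (hθ₁ : 0 < θ₁) (hθ₂ : 0 < θ₂)
    (hIC₁ : θ₁ * t₂ - p₂ ≤ θ₁ * t₁ - p₁) (hIC₂ : θ₂ * t₁ - p₁ ≤ θ₂ * t₂ - p₂) :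
    p₁ = p₂ ↔ t₁ = t₂ := by
  constructor
  · rintro rfl
    have ht₂₁ : t₂ ≤ t₁ := le_of_mul_le_mul_left (sub_le_sub_iff_right p₁ |>.mp hIC₁) hθ₁
    have ht₁₂ : t₁ ≤ t₂ := le_of_mul_le_mul_left (sub_le_sub_iff_right p₁ |>.mp hIC₂) hθ₂
    exact le_antisymm ht₁₂ ht₂₁
  · rintro rfl
    exact le_antisymm (by linarith) (by linarith)

end IncentiveCompatiblePair

theorem ic_power_time_eq_general
    (K : ℕ) (θ p t : ℕ → ℝ)
    (hθpos : ∀ k, 1 ≤ k → k ≤ K → 0 < θ k)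
    (hIC : ∀ k j, 1 ≤ k → k ≤ K → 1 ≤ j → j ≤ K →
      θ k * t k - p k ≥ θ k * t j - p j) :
    ∀ i j, 1 ≤ i → i ≤ K → 1 ≤ j → j ≤ K → (p i = p j ↔ t i = t j) := by
  intro i j hi1 hiK hj1 hjK
  exact ic_pair_price_eq_iff_time_eq (hθpos i hi1 hiK) (hθpos j hj1 hjK)
    (hIC i j hi1 hiK hj1 hjK) (hIC j i hj1 hjK hi1 hiK)

/-- If a contract satisfies the incentive compatibility constraints, then
`p i = p j` if and only if `t i = t j`. -/
theorem ic_power_time_eq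
    (K : ℕ) (hK : 1 ≤ K) (θ p t : ℕ → ℝ)
    (hθpos : ∀ k, 1 ≤ k → k ≤ K → 0 < θ k)
    (hθmono : ∀ i j, 1 ≤ i → i < j → j ≤ K → θ i < θ j)
    (hp : ∀ k, 1 ≤ k → k ≤ K → 0 ≤ p k)
    (ht : ∀ k, 1 ≤ k → k ≤ K → 0 ≤ t k)
    (hIC : ∀ k j, 1 ≤ k → k ≤ K → 1 ≤ j → j ≤ K →
      θ k * t k - p k ≥ θ k * t j - p j) :
    ∀ i j, 1 ≤ i → i ≤ K → 1 ≤ j → j ≤ K → (p i = p j ↔ t i = t j) :=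
  ic_power_time_eq_general K θ p t hθpos hIC
end

section
/- A contract {(p_k,t_k)}_{k=1}^K is feasible (i.e., satisfies all IC and IR constraints) if and only if: (a) 0 ≤ p_1 ≤ p_2 ≤ ... ≤ p_K and 0 ≤ t_1 ≤ t_2 ≤ ... ≤ t_K; (b) θ_1 t_1 − p_1 ≥ 0; and (c) for every k = 2,...,K, p_{k−1} + θ_{k−1}(t_k − t_{k−1}) ≤ p_k ≤ p_{k−1} + θ_k(t_k − t_{k−1}). -/
/-! The payoff `θ k * t j - p j` of type `k` announcing `j` changes, from `j` to `j + 1`, by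
`θ k * (t (j+1) - t j) - (p (j+1) - p j)`. Given (c) and the monotonicity of `θ` and `t`, this
increment is nonnegative for `j < k` and nonpositive for `j ≥ k`, so truthful reporting is optimal
and the IC constraints between neighbours imply all of them; IR then propagates up from type `1`.
Conversely, adding the two IC constraints between `k - 1` and `k` gives
`(θ k - θ (k-1)) * (t k - t (k-1)) ≥ 0`, which forces `t` to increase, and (c) is a rearrangement
of these two constraints. -/

open Set

section
variable {β : Type*} [Preorder β] {f : ℕ → β} {a b : ℕ}

theorem monotoneOn_Icc_of_le_succ (hf : ∀ n, a ≤ n → n < b → f n ≤ f (n + 1)) :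
    MonotoneOn f (Icc a b) :=
  monotoneOn_of_le_succ ordConnected_Icc fun n _ hn hn' => by
    simpa using hf n hn.1 (by simpa using hn'.2)

theorem antitoneOn_Icc_of_succ_le (hf : ∀ n, a ≤ n → n < b → f (n + 1) ≤ f n) :
    AntitoneOn f (Icc a b) :=
  monotoneOn_Icc_of_le_succ (β := βᵒᵈ) hf

end

section
variable {θ θ' t t' p p' : ℝ}

theorem price_bounds_of_incentiveCompatible (h : θ * t - p ≥ θ * t' - p')
    (h' : θ' * t' - p' ≥ θ' * t - p) :
    p + θ * (t' - t) ≤ p' ∧ p' ≤ p + θ' * (t' - t) :=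
  ⟨by linarith, by linarith⟩

theorem quantity_le_of_incentiveCompatible (hθ : θ < θ') (h : θ * t - p ≥ θ * t' - p')
    (h' : θ' * t' - p' ≥ θ' * t - p) : t ≤ t' := by
  nlinarith

theorem payoff_le_payoff_of_upper_bound (ht : t ≤ t') (hθ : θ' ≤ θ)
    (hp : p' ≤ p + θ' * (t' - t)) : θ * t - p ≤ θ * t' - p' := by
  nlinarith

theorem payoff_le_payoff_of_lower_bound (ht : t ≤ t') (hθ : θ ≤ θ')
    (hp : p + θ' * (t' - t) ≤ p') : θ * t' - p' ≤ θ * t - p := by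
  nlinarith

end

section
variable {K : ℕ} {θ p t : ℕ → ℝ}

theorem monotoneOn_of_incentiveCompatible (hθpos : ∀ k, 1 ≤ k → k ≤ K → 0 < θ k)
    (hθ : StrictMonoOn θ (Icc 1 K))
    (hIC : ∀ k j, 1 ≤ k → k ≤ K → 1 ≤ j → j ≤ K → θ k * t k - p k ≥ θ k * t j - p j) :
    MonotoneOn p (Icc 1 K) ∧ MonotoneOn t (Icc 1 K) := by
  have hIC_succ (n : ℕ) (hn : 1 ≤ n) (hnK : n < K) :
      θ n * t n - p n ≥ θ n * t (n + 1) - p (n + 1) ∧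
        θ (n + 1) * t (n + 1) - p (n + 1) ≥ θ (n + 1) * t n - p n :=
    ⟨hIC n (n + 1) hn hnK.le (by omega) hnK, hIC (n + 1) n (by omega) hnK hn hnK.le⟩
  have ht : MonotoneOn t (Icc 1 K) := monotoneOn_Icc_of_le_succ fun n hn hnK =>
    quantity_le_of_incentiveCompatible (hθ ⟨hn, hnK.le⟩ ⟨by omega, hnK⟩ n.lt_succ_self)
      (hIC_succ n hn hnK).1 (hIC_succ n hn hnK).2
  refine ⟨monotoneOn_Icc_of_le_succ fun n hn hnK => ?_, ht⟩
  obtain ⟨hdown, hup⟩ := hIC_succ n hn hnK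
  have hlower := (price_bounds_of_incentiveCompatible hdown hup).1
  have hstep : t n ≤ t (n + 1) := ht ⟨hn, hnK.le⟩ ⟨by omega, hnK⟩ n.le_succ
  nlinarith [hθpos n hn hnK.le]

theorem incentiveCompatible_of_local (hθ : MonotoneOn θ (Icc 1 K)) (ht : MonotoneOn t (Icc 1 K))
    (hlocal : ∀ n, 1 ≤ n → n < K →
      p n + θ n * (t (n + 1) - t n) ≤ p (n + 1) ∧ p (n + 1) ≤ p n + θ (n + 1) * (t (n + 1) - t n))
    {k j : ℕ} (hk : k ∈ Icc 1 K) (hj : j ∈ Icc 1 K) :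
    θ k * t j - p j ≤ θ k * t k - p k := by
  rw [mem_Icc] at hk hj
  have hstep (n : ℕ) (hn : 1 ≤ n) (hnK : n < K) : t n ≤ t (n + 1) :=
    ht ⟨hn, hnK.le⟩ ⟨by omega, hnK⟩ n.le_succ
  rcases le_total j k with hjk | hkj
  · have hmono : MonotoneOn (fun i => θ k * t i - p i) (Icc 1 k) :=
      monotoneOn_Icc_of_le_succ fun n hn hnk =>
        payoff_le_payoff_of_upper_bound (hstep n hn (by omega))
          (hθ ⟨by omega, by omega⟩ hk hnk) (hlocal n hn (by omega)).2
    exact hmono ⟨hj.1, hjk⟩ ⟨hk.1, le_rfl⟩ hjk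
  · have hanti : AntitoneOn (fun i => θ k * t i - p i) (Icc k K) :=
      antitoneOn_Icc_of_succ_le fun n hkn hnK =>
        payoff_le_payoff_of_lower_bound (hstep n (by omega) hnK)
          (hθ hk ⟨by omega, hnK.le⟩ hkn) (hlocal n (by omega) hnK).1
    exact hanti ⟨le_rfl, hk.2⟩ ⟨hkj, hj.2⟩ hkj

end

theorem feasible_iff_conditions_general
    (K : ℕ) (hK : 1 ≤ K) (θ p t : ℕ → ℝ)
    (hθpos : ∀ k, 1 ≤ k → k ≤ K → 0 < θ k)
    (hθmono : ∀ i j, 1 ≤ i → i < j → j ≤ K → θ i < θ j)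
    (ht : ∀ k, 1 ≤ k → k ≤ K → 0 ≤ t k) :
    ((∀ k j, 1 ≤ k → k ≤ K → 1 ≤ j → j ≤ K → θ k * t k - p k ≥ θ k * t j - p j) ∧
     (∀ k, 1 ≤ k → k ≤ K → θ k * t k - p k ≥ 0))
    ↔
    ((∀ i j, 1 ≤ i → i ≤ j → j ≤ K → p i ≤ p j ∧ t i ≤ t j) ∧
     θ 1 * t 1 - p 1 ≥ 0 ∧
     (∀ k, 2 ≤ k → k ≤ K →
       p (k - 1) + θ (k - 1) * (t k - t (k - 1)) ≤ p k ∧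
       p k ≤ p (k - 1) + θ k * (t k - t (k - 1)))) := by
  have hθ : StrictMonoOn θ (Icc 1 K) := fun i hi j hj hij => hθmono i j hi.1 hij hj.2
  constructor
  · rintro ⟨hIC, hIR⟩
    obtain ⟨hpm, htm⟩ := monotoneOn_of_incentiveCompatible hθpos hθ hIC
    refine ⟨fun i j hi hij hj => ?_, hIR 1 le_rfl hK, fun k hk hkK => ?_⟩
    · have hi' : i ∈ Icc 1 K := ⟨hi, hij.trans hj⟩
      have hj' : j ∈ Icc 1 K := ⟨hi.trans hij, hj⟩
      exact ⟨hpm hi' hj' hij, htm hi' hj' hij⟩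
    · exact price_bounds_of_incentiveCompatible (hIC (k - 1) k (by omega) (by omega) (by omega) hkK)
        (hIC k (k - 1) (by omega) hkK (by omega) (by omega))
  · rintro ⟨hmono, hIR1, hlocal⟩
    have htm : MonotoneOn t (Icc 1 K) := fun i hi j hj hij => (hmono i j hi.1 hij hj.2).2
    have hIC k j (hk : 1 ≤ k) (hkK : k ≤ K) (hj : 1 ≤ j) (hjK : j ≤ K) :=
      incentiveCompatible_of_local hθ.monotoneOn htm
        (fun n hn hnK => by simpa using hlocal (n + 1) (by omega) hnK) ⟨hk, hkK⟩ ⟨hj, hjK⟩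
    refine ⟨hIC, fun k hk hkK => ?_⟩
    have hθk : θ 1 ≤ θ k := hθ.monotoneOn ⟨le_rfl, hK⟩ ⟨hk, hkK⟩ hk
    calc 0 ≤ θ 1 * t 1 - p 1 := hIR1
      _ ≤ θ k * t 1 - p 1 := by gcongr; exact ht 1 le_rfl hK
      _ ≤ θ k * t k - p k := hIC k 1 hk hkK le_rfl hK

/-- A contract is feasible (satisfies all IC and IR constraints) iff conditions
(a) monotone powers and times, (b) IR for the lowest type, and (c) the chained
power bounds hold. -/
theorem feasible_iff_conditions
    (K : ℕ) (hK : 1 ≤ K) (θ p t : ℕ → ℝ)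
    (hθpos : ∀ k, 1 ≤ k → k ≤ K → 0 < θ k)
    (hθmono : ∀ i j, 1 ≤ i → i < j → j ≤ K → θ i < θ j)
    (hp : ∀ k, 1 ≤ k → k ≤ K → 0 ≤ p k)
    (ht : ∀ k, 1 ≤ k → k ≤ K → 0 ≤ t k) :
    ((∀ k j, 1 ≤ k → k ≤ K → 1 ≤ j → j ≤ K → θ k * t k - p k ≥ θ k * t j - p j) ∧
     (∀ k, 1 ≤ k → k ≤ K → θ k * t k - p k ≥ 0))
    ↔
    ((∀ i j, 1 ≤ i → i ≤ j → j ≤ K → p i ≤ p j ∧ t i ≤ t j) ∧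
     θ 1 * t 1 - p 1 ≥ 0 ∧
     (∀ k, 2 ≤ k → k ≤ K →
       p (k - 1) + θ (k - 1) * (t k - t (k - 1)) ≤ p k ∧
       p k ≤ p (k - 1) + θ k * (t k - t (k - 1)))) :=
  feasible_iff_conditions_general K hK θ p t hθpos hθmono ht
end

section
/- Given conditions (a) 0 ≤ t_1 ≤ ... ≤ t_K, and (c) p_{k−1} + θ_{k−1}(t_k − t_{k−1}) ≤ p_k ≤ p_{k−1} + θ_k(t_k − t_{k−1}) for k = 2,...,K, the upward incentive compatibility constraints hold: for all i < k, θ_i t_i − p_i ≥ θ_i t_k − p_k. -/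
/-! The lower half of (c) says that moving from item `n` to item `n + 1` costs at least `θₙ`
per extra unit of `t`; every type `θᵢ ≤ θₙ` values that unit less, so its payoff
`θᵢ tₖ - pₖ` is antitone in `k ≥ i`. -/

theorem mul_sub_le_mul_sub_of_add_mul_le {a b s t p q : ℝ} (hab : a ≤ b) (hst : s ≤ t)
    (hpq : p + b * (t - s) ≤ q) : a * t - q ≤ a * s - p := by
  nlinarith

theorem conditions_imply_upward_IC_general
    (K : ℕ) (θ p t : ℕ → ℝ)
    (hθmono : ∀ i j, 1 ≤ i → i < j → j ≤ K → θ i < θ j)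
    (ha : ∀ i j, 1 ≤ i → i ≤ j → j ≤ K → t i ≤ t j)
    (hc : ∀ k, 2 ≤ k → k ≤ K →
      p (k - 1) + θ (k - 1) * (t k - t (k - 1)) ≤ p k ∧
      p k ≤ p (k - 1) + θ k * (t k - t (k - 1))) :
    ∀ i k, 1 ≤ i → i < k → k ≤ K → θ i * t i - p i ≥ θ i * t k - p k := by
  intro i k hi hik hkK
  have hpayoff : AntitoneOn (fun n => θ i * t n - p n) (Set.Icc i K) := by
    refine antitoneOn_of_add_one_le Set.ordConnected_Icc fun n _ hn hn1 => ?_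
    have hθ : θ i ≤ θ n := by
      rcases hn.1.eq_or_lt with rfl | hlt
      · exact le_rfl
      · exact (hθmono i n hi hlt hn.2).le
    have hprice := (hc (n + 1) (Nat.succ_le_succ (hi.trans hn.1)) hn1.2).1
    rw [Nat.add_sub_cancel] at hprice
    exact mul_sub_le_mul_sub_of_add_mul_le hθ (ha n (n + 1) (hi.trans hn.1) n.le_succ hn1.2) hprice
  exact hpayoff ⟨le_rfl, hik.le.trans hkK⟩ ⟨hik.le, hkK⟩ hik.le

/-- Conditions (a) and (c) imply the upward incentive compatibility constraints. -/
theorem conditions_imply_upward_IC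
    (K : ℕ) (hK : 1 ≤ K) (θ p t : ℕ → ℝ)
    (hθpos : ∀ k, 1 ≤ k → k ≤ K → 0 < θ k)
    (hθmono : ∀ i j, 1 ≤ i → i < j → j ≤ K → θ i < θ j)
    (hp : ∀ k, 1 ≤ k → k ≤ K → 0 ≤ p k)
    (ht : ∀ k, 1 ≤ k → k ≤ K → 0 ≤ t k)
    (ha : ∀ i j, 1 ≤ i → i ≤ j → j ≤ K → t i ≤ t j)
    (hc : ∀ k, 2 ≤ k → k ≤ K →
      p (k - 1) + θ (k - 1) * (t k - t (k - 1)) ≤ p k ∧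
      p k ≤ p (k - 1) + θ k * (t k - t (k - 1))) :
    ∀ i k, 1 ≤ i → i < k → k ≤ K → θ i * t i - p i ≥ θ i * t k - p k :=
  conditions_imply_upward_IC_general K θ p t hθmono ha hc
end

section
/- In an optimal contract under complete information, each secondary user receives zero payoff: θ_k t_k = p_k for every k. That is, if some contract item satisfies θ_k t_k − p_k > 0, then the contract is not optimal, since decreasing t_k strictly increases the PU's utility. -/
open Finset

/-!
If some type keeps a positive payoff, `p k < θ k * t k`, the PU can raise that type's payment
to `θ k * t k`. The contract stays admissible, the total payment `∑ N j * p j` strictly grows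
because `N k > 0`, so the logarithmic numerator of `u` strictly grows while the denominator is
unchanged and positive. Hence the original contract was not optimal.
-/

def IsAdmissible (K : ℕ) (θ p t : ℕ → ℝ) : Prop :=
  (∀ k, 1 ≤ k → k ≤ K → 0 ≤ p k) ∧ (∀ k, 1 ≤ k → k ≤ K → 0 ≤ t k) ∧
    (∀ k, 1 ≤ k → k ≤ K → θ k * t k - p k ≥ 0)

theorem IsAdmissible.update_payment {K : ℕ} {θ p t : ℕ → ℝ} (h : IsAdmissible K θ p t)
    (k : ℕ) {b : ℝ} (hb : 0 ≤ b) (hbθ : b ≤ θ k * t k) :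
    IsAdmissible K θ (Function.update p k b) t := by
  obtain ⟨hp, ht, hIR⟩ := h
  refine ⟨fun j hj1 hjK => ?_, ht, fun j hj1 hjK => ?_⟩ <;>
    rcases eq_or_ne j k with rfl | hjk
  · simpa using hb
  · simpa [Function.update_of_ne hjk] using hp j hj1 hjK
  · simpa using hbθ
  · simpa [Function.update_of_ne hjk] using hIR j hj1 hjK

theorem Finset.sum_mul_lt_sum_mul_update {ι : Type*} [DecidableEq ι] {s : Finset ι}
    {w f : ι → ℝ} {i : ι} (hi : i ∈ s) (hw : 0 < w i) {b : ℝ} (hb : f i < b) :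
    ∑ j ∈ s, w j * f j < ∑ j ∈ s, w j * Function.update f i b j := by
  refine Finset.sum_lt_sum (fun j _ => ?_) ⟨i, hi, by simpa using mul_lt_mul_of_pos_left hb hw⟩
  rcases eq_or_ne j i with rfl | hji
  · simpa using mul_le_mul_of_nonneg_left hb.le hw.le
  · simp [Function.update_of_ne hji]

/-- The numerator of `u` as a function of the total payment `S = ∑ N k * p k`. -/
noncomputable def puBenefit (R n0 S : ℝ) : ℝ :=
  R / 2 + (1 / 2) * Real.log (1 + S / n0)

theorem puBenefit_strictMonoOn (R : ℝ) {n0 : ℝ} (hn0 : 0 < n0) :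
    StrictMonoOn (puBenefit R n0) (Set.Ici 0) := by
  intro S hS S' _ hSS'
  have hlog : Real.log (1 + S / n0) < Real.log (1 + S' / n0) :=
    Real.log_lt_log (by have : (0 : ℝ) ≤ S := hS; positivity) (by gcongr)
  unfold puBenefit
  gcongr

theorem optimal_complete_info_zero_payoff_general
    (K : ℕ) (θ N : ℕ → ℝ) (R n0 : ℝ)
    (hN : ∀ k, 1 ≤ k → k ≤ K → 1 ≤ N k)
    (hn0 : 0 < n0)
    (u : (ℕ → ℝ) → (ℕ → ℝ) → ℝ)
    (hu : ∀ p t, u p t =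
      (R / 2 + (1 / 2) * Real.log (1 + (∑ k ∈ Finset.Icc 1 K, N k * p k) / n0)) /
        (1 + ∑ k ∈ Finset.Icc 1 K, N k * t k))
    (p t : ℕ → ℝ)
    (hadm : (∀ k, 1 ≤ k → k ≤ K → 0 ≤ p k) ∧ (∀ k, 1 ≤ k → k ≤ K → 0 ≤ t k) ∧
      (∀ k, 1 ≤ k → k ≤ K → θ k * t k - p k ≥ 0))
    (hopt : ∀ p' t' : ℕ → ℝ,
      ((∀ k, 1 ≤ k → k ≤ K → 0 ≤ p' k) ∧ (∀ k, 1 ≤ k → k ≤ K → 0 ≤ t' k) ∧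
        (∀ k, 1 ≤ k → k ≤ K → θ k * t' k - p' k ≥ 0)) →
      u p' t' ≤ u p t) :
    ∀ k, 1 ≤ k → k ≤ K → θ k * t k = p k := by
  intro k hk1 hkK
  obtain ⟨hp, ht, hIR⟩ := hadm
  have hweighted_nonneg : ∀ f : ℕ → ℝ, (∀ j, 1 ≤ j → j ≤ K → 0 ≤ f j) →
      0 ≤ ∑ j ∈ Icc 1 K, N j * f j := fun f hf =>
    sum_nonneg fun j hj => by
      obtain ⟨hj1, hjK⟩ := mem_Icc.1 hj
      exact mul_nonneg (zero_le_one.trans (hN j hj1 hjK)) (hf j hj1 hjK)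
  by_contra hne
  have hpk : p k < θ k * t k := lt_of_le_of_ne (sub_nonneg.1 (hIR k hk1 hkK)) (Ne.symm hne)
  set p' := Function.update p k (θ k * t k)
  have hadm' : IsAdmissible K θ p' t :=
    IsAdmissible.update_payment ⟨hp, ht, hIR⟩ k ((hp k hk1 hkK).trans hpk.le) le_rfl
  have hsum : ∑ j ∈ Icc 1 K, N j * p j < ∑ j ∈ Icc 1 K, N j * p' j :=
    sum_mul_lt_sum_mul_update (mem_Icc.2 ⟨hk1, hkK⟩) (zero_lt_one.trans_le (hN k hk1 hkK)) hpk
  have hbetter : u p t < u p' t := by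
    rw [hu, hu]
    exact div_lt_div_of_pos_right
      (puBenefit_strictMonoOn R hn0 (hweighted_nonneg p hp)
        ((hweighted_nonneg p hp).trans hsum.le) hsum)
      (by linarith [hweighted_nonneg t ht])
  exact (hopt p' t hadm').not_gt hbetter

/-- In an optimal contract under complete information, each SU receives zero payoff:
`θ k * t k = p k` for every type `k`. -/
theorem optimal_complete_info_zero_payoff
    (K : ℕ) (hK : 1 ≤ K) (θ N : ℕ → ℝ) (R n0 : ℝ)
    (hθpos : ∀ k, 1 ≤ k → k ≤ K → 0 < θ k)
    (hθmono : ∀ i j, 1 ≤ i → i < j → j ≤ K → θ i < θ j)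
    (hN : ∀ k, 1 ≤ k → k ≤ K → 1 ≤ N k)
    (hR : 0 ≤ R) (hn0 : 0 < n0)
    (u : (ℕ → ℝ) → (ℕ → ℝ) → ℝ)
    (hu : ∀ p t, u p t =
      (R / 2 + (1 / 2) * Real.log (1 + (∑ k ∈ Finset.Icc 1 K, N k * p k) / n0)) /
        (1 + ∑ k ∈ Finset.Icc 1 K, N k * t k))
    (p t : ℕ → ℝ)
    (hadm : (∀ k, 1 ≤ k → k ≤ K → 0 ≤ p k) ∧ (∀ k, 1 ≤ k → k ≤ K → 0 ≤ t k) ∧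
      (∀ k, 1 ≤ k → k ≤ K → θ k * t k - p k ≥ 0))
    (hopt : ∀ p' t' : ℕ → ℝ,
      ((∀ k, 1 ≤ k → k ≤ K → 0 ≤ p' k) ∧ (∀ k, 1 ≤ k → k ≤ K → 0 ≤ t' k) ∧
        (∀ k, 1 ≤ k → k ≤ K → θ k * t' k - p' k ≥ 0)) →
      u p' t' ≤ u p t) :
    ∀ k, 1 ≤ k → k ≤ K → θ k * t k = p k :=
  optimal_complete_info_zero_payoff_general K θ N R n0 hN hn0 u hu p t hadm hopt
end

section
/- Under complete information, any contract with θ_k t_k = p_k for all k, total time allocation T' = Σ_k N_k t_k, and t_k > 0 for some k < K yields strictly smaller PU utility than the contract that allocates the entire time T' to the highest type K (i.e., t_K = T'/N_K, t_k = 0 for k < K, with p_K = θ_K t_K). Consequently, in an optimal contract only the highest type receives a positive item. -/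
open Finset

/-!
Write `w k = N k * t k` for the time served to type `k`. The throughput `∑ w k θ k` is a
`w`-weighted sum of the `θ k`, hence strictly below `θ K * ∑ w k = θ K * T'` as soon as some
lower type gets positive weight. Moving all the time to type `K` keeps the cost `1 + T'` and
strictly raises the logarithmic benefit.
-/

/-- PU utility of a contract with total time `T` and throughput `x = ∑ k, N k * θ k * t k`. -/
noncomputable def puUtility (R n0 T x : ℝ) : ℝ :=
  (R / 2 + (1 / 2) * Real.log (1 + x / n0)) / (1 + T)

lemma puUtility_lt_puUtility {R n0 T x y : ℝ} (hn0 : 0 < n0) (hT : 0 < 1 + T) (hx : 0 ≤ x)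
    (hxy : x < y) : puUtility R n0 T x < puUtility R n0 T y := by
  unfold puUtility
  gcongr

lemma sum_mul_lt_mul_sum_of_exists_lt {ι : Type*} {s : Finset ι} {w a : ι → ℝ} {M : ℝ}
    (hw : ∀ i ∈ s, 0 ≤ w i) (ha : ∀ i ∈ s, a i ≤ M) (hlt : ∃ i ∈ s, 0 < w i ∧ a i < M) :
    ∑ i ∈ s, w i * a i < M * ∑ i ∈ s, w i := by
  rw [mul_sum]
  obtain ⟨i, hi, hwi, hai⟩ := hlt
  refine sum_lt_sum (fun j hj => ?_) ⟨i, hi, ?_⟩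
  · rw [mul_comm M]
    exact mul_le_mul_of_nonneg_left (ha j hj) (hw j hj)
  · rw [mul_comm M]
    exact mul_lt_mul_of_pos_left hai hwi

theorem highest_type_only_is_better_general
    (K : ℕ) (θ N t : ℕ → ℝ) (R n0 T' : ℝ)
    (hθpos : ∀ k, 1 ≤ k → k ≤ K → 0 < θ k)
    (hθmono : ∀ i j, 1 ≤ i → i < j → j ≤ K → θ i < θ j)
    (hN : ∀ k, 1 ≤ k → k ≤ K → 1 ≤ N k)
    (hn0 : 0 < n0)
    (ht : ∀ k, 1 ≤ k → k ≤ K → 0 ≤ t k)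
    (hT' : T' = ∑ k ∈ Finset.Icc 1 K, N k * t k)
    (hlow : ∃ k, 1 ≤ k ∧ k < K ∧ 0 < t k) :
    (R / 2 + (1 / 2) * Real.log (1 + (∑ k ∈ Finset.Icc 1 K, N k * (θ k * t k)) / n0)) /
        (1 + T')
      <
    (R / 2 + (1 / 2) * Real.log (1 + θ K * T' / n0)) / (1 + T') := by
  obtain ⟨k0, hk0, hk0K, htk0⟩ := hlow
  have hw : ∀ k ∈ Icc 1 K, 0 ≤ N k * t k := fun k hk => by
    obtain ⟨h1, hK⟩ := mem_Icc.mp hk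
    exact mul_nonneg (zero_le_one.trans (hN k h1 hK)) (ht k h1 hK)
  have hθK : ∀ k ∈ Icc 1 K, θ k ≤ θ K := fun k hk => by
    obtain ⟨h1, hK⟩ := mem_Icc.mp hk
    rcases hK.lt_or_eq with hlt | rfl
    · exact (hθmono k K h1 hlt le_rfl).le
    · exact le_rfl
  have hthroughput : ∑ k ∈ Icc 1 K, N k * (θ k * t k) = ∑ k ∈ Icc 1 K, N k * t k * θ k :=
    sum_congr rfl fun _ _ => by ring
  have hthroughput_nonneg : 0 ≤ ∑ k ∈ Icc 1 K, N k * (θ k * t k) := by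
    rw [hthroughput]
    exact sum_nonneg fun k hk =>
      mul_nonneg (hw k hk) (hθpos k (mem_Icc.mp hk).1 (mem_Icc.mp hk).2).le
  have hthroughput_lt : ∑ k ∈ Icc 1 K, N k * (θ k * t k) < θ K * T' := by
    rw [hthroughput, hT']
    refine sum_mul_lt_mul_sum_of_exists_lt hw hθK ⟨k0, mem_Icc.mpr ⟨hk0, hk0K.le⟩, ?_, ?_⟩
    · exact mul_pos (zero_lt_one.trans_le (hN k0 hk0 hk0K.le)) htk0
    · exact hθmono k0 K hk0 hk0K le_rfl
  have hT'_nonneg : 0 ≤ T' := hT' ▸ sum_nonneg hw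
  exact puUtility_lt_puUtility hn0 (by linarith) hthroughput_nonneg hthroughput_lt

/-- Under complete information, any zero-payoff contract allocating positive time to a
type below the highest yields strictly smaller PU utility than allocating all the time
`T'` to the highest type `K`. -/
theorem highest_type_only_is_better
    (K : ℕ) (hK : 2 ≤ K) (θ N t : ℕ → ℝ) (R n0 T' : ℝ)
    (hθpos : ∀ k, 1 ≤ k → k ≤ K → 0 < θ k)
    (hθmono : ∀ i j, 1 ≤ i → i < j → j ≤ K → θ i < θ j)
    (hN : ∀ k, 1 ≤ k → k ≤ K → 1 ≤ N k)
    (hR : 0 ≤ R) (hn0 : 0 < n0)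
    (ht : ∀ k, 1 ≤ k → k ≤ K → 0 ≤ t k)
    (hT' : T' = ∑ k ∈ Finset.Icc 1 K, N k * t k)
    (hlow : ∃ k, 1 ≤ k ∧ k < K ∧ 0 < t k) :
    (R / 2 + (1 / 2) * Real.log (1 + (∑ k ∈ Finset.Icc 1 K, N k * (θ k * t k)) / n0)) /
        (1 + T')
      <
    (R / 2 + (1 / 2) * Real.log (1 + θ K * T' / n0)) / (1 + T') :=
  highest_type_only_is_better_general K θ N t R n0 T' hθpos hθmono hN hn0 ht hT' hlow
end

section
/- Given fixed time allocations 0 ≤ t_1 ≤ ... ≤ t_K, the relay powers p_1* = θ_1 t_1 and p_k* = θ_1 t_1 + Σ_{i=2}^k θ_i (t_i − t_{i−1}) for k ≥ 2 form a feasible contract, i.e., they satisfy all IC and IR constraints. -/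
/-!
Write `Δ i = t i - t (i - 1)`. For `j ≤ k` the definition gives `p k - p j = ∑_{j < i ≤ k} θ i Δ i`,
while `t k - t j = ∑_{j < i ≤ k} Δ i`. Since every `Δ i ≥ 0` and `θ j ≤ θ i ≤ θ k` on that range,
`θ j (t k - t j) ≤ p k - p j ≤ θ k (t k - t j)`: the upper bound is type `k`'s incentive constraint
against `j`, the lower bound type `j`'s against `k`. Individual rationality follows from the
incentive constraint against type `1`, whose utility is `0`.
-/

open Finset

theorem Finset.sum_Ioc_sub_pred (f : ℕ → ℝ) {j k : ℕ} (hjk : j ≤ k) :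
    ∑ i ∈ Ioc j k, (f i - f (i - 1)) = f k - f j := by
  induction k, hjk using Nat.le_induction with
  | base => simp
  | succ n hjn ih =>
    rw [sum_Ioc_succ_top hjn, ih, Nat.add_sub_cancel]
    ring

section WeightedIncrements

variable {θ t : ℕ → ℝ} {j k : ℕ} {c : ℝ}

theorem sum_Ioc_mul_sub_pred_le (hjk : j ≤ k) (hθ : ∀ i ∈ Ioc j k, θ i ≤ c)
    (ht : ∀ i ∈ Ioc j k, t (i - 1) ≤ t i) :
    ∑ i ∈ Ioc j k, θ i * (t i - t (i - 1)) ≤ c * (t k - t j) := by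
  rw [← sum_Ioc_sub_pred t hjk, mul_sum]
  exact sum_le_sum fun i hi => mul_le_mul_of_nonneg_right (hθ i hi) (sub_nonneg.2 (ht i hi))

theorem le_sum_Ioc_mul_sub_pred (hjk : j ≤ k) (hθ : ∀ i ∈ Ioc j k, c ≤ θ i)
    (ht : ∀ i ∈ Ioc j k, t (i - 1) ≤ t i) :
    c * (t k - t j) ≤ ∑ i ∈ Ioc j k, θ i * (t i - t (i - 1)) := by
  rw [← sum_Ioc_sub_pred t hjk, mul_sum]
  exact sum_le_sum fun i hi => mul_le_mul_of_nonneg_right (hθ i hi) (sub_nonneg.2 (ht i hi))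

end WeightedIncrements

theorem incentive_compatible_of_sub_eq_sum {θ t p : ℕ → ℝ} {a b : ℕ}
    (hθ : MonotoneOn θ (Set.Icc a b)) (ht : MonotoneOn t (Set.Icc a b))
    (hp : ∀ j k, a ≤ j → j ≤ k → k ≤ b → p k - p j = ∑ i ∈ Ioc j k, θ i * (t i - t (i - 1)))
    {j k : ℕ} (hj : j ∈ Set.Icc a b) (hk : k ∈ Set.Icc a b) :
    θ k * t j - p j ≤ θ k * t k - p k := by
  have ht_step : ∀ {j k}, a ≤ j → k ≤ b → ∀ i ∈ Ioc j k, t (i - 1) ≤ t i := by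
    intro j k hj hk i hi
    rw [mem_Ioc] at hi
    exact ht ⟨by omega, by omega⟩ ⟨by omega, by omega⟩ (Nat.sub_le i 1)
  rcases le_total j k with hjk | hkj
  · have := sum_Ioc_mul_sub_pred_le hjk
      (fun i hi => hθ ⟨hj.1.trans (mem_Ioc.1 hi).1.le, (mem_Ioc.1 hi).2.trans hk.2⟩ hk
        (mem_Ioc.1 hi).2) (ht_step hj.1 hk.2)
    linarith [hp j k hj.1 hjk hk.2]
  · have := le_sum_Ioc_mul_sub_pred hkj
      (fun i hi => hθ hk ⟨hk.1.trans (mem_Ioc.1 hi).1.le, (mem_Ioc.1 hi).2.trans hj.2⟩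
        (mem_Ioc.1 hi).1.le) (ht_step hk.1 hj.2)
    linarith [hp k j hk.1 hkj hj.2]

theorem pstar_feasible_general
    (K : ℕ) (θ t p : ℕ → ℝ)
    (hθmono : ∀ i j, 1 ≤ i → i < j → j ≤ K → θ i < θ j)
    (ht0 : 0 ≤ t 1)
    (htmono : ∀ i j, 1 ≤ i → i ≤ j → j ≤ K → t i ≤ t j)
    (hpdef : ∀ k, 1 ≤ k → k ≤ K →
      p k = θ 1 * t 1 + ∑ i ∈ Finset.Icc 2 k, θ i * (t i - t (i - 1))) :
    (∀ k j, 1 ≤ k → k ≤ K → 1 ≤ j → j ≤ K →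
      θ k * t k - p k ≥ θ k * t j - p j) ∧
    (∀ k, 1 ≤ k → k ≤ K → θ k * t k - p k ≥ 0) := by
  have hθ : MonotoneOn θ (Set.Icc 1 K) :=
    StrictMonoOn.monotoneOn fun i hi j hj hij => hθmono i j hi.1 hij hj.2
  have ht : MonotoneOn t (Set.Icc 1 K) := fun i hi j hj hij => htmono i j hi.1 hij hj.2
  have hp_sub : ∀ j k, 1 ≤ j → j ≤ k → k ≤ K →
      p k - p j = ∑ i ∈ Ioc j k, θ i * (t i - t (i - 1)) := by
    intro j k hj hjk hk
    have hIcc : ∀ n, Icc 2 n = Ioc 1 n := Icc_add_one_left_eq_Ioc 1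
    rw [hpdef k (hj.trans hjk) hk, hpdef j hj (hjk.trans hk), hIcc, hIcc,
      ← sum_Ioc_consecutive _ hj hjk]
    ring
  have hIC : ∀ k j, 1 ≤ k → k ≤ K → 1 ≤ j → j ≤ K → θ k * t k - p k ≥ θ k * t j - p j :=
    fun k j hk hkK hj hjK => incentive_compatible_of_sub_eq_sum hθ ht hp_sub ⟨hj, hjK⟩ ⟨hk, hkK⟩
  refine ⟨hIC, fun k hk hkK => ?_⟩
  have hp1 : p 1 = θ 1 * t 1 := by simpa using hpdef 1 le_rfl (hk.trans hkK)
  have := mul_nonneg (sub_nonneg.2 (hθ ⟨le_rfl, hk.trans hkK⟩ ⟨hk, hkK⟩ hk)) ht0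
  linarith [hIC k 1 hk hkK le_rfl (hk.trans hkK)]

/-- Given fixed monotone time allocations, the relay powers
`p* k = θ 1 * t 1 + ∑_{i=2}^k θ i * (t i - t (i-1))` form a feasible contract. -/
theorem pstar_feasible
    (K : ℕ) (hK : 1 ≤ K) (θ t p : ℕ → ℝ)
    (hθpos : ∀ k, 1 ≤ k → k ≤ K → 0 < θ k)
    (hθmono : ∀ i j, 1 ≤ i → i < j → j ≤ K → θ i < θ j)
    (ht0 : 0 ≤ t 1)
    (htmono : ∀ i j, 1 ≤ i → i ≤ j → j ≤ K → t i ≤ t j)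
    (hpdef : ∀ k, 1 ≤ k → k ≤ K →
      p k = θ 1 * t 1 + ∑ i ∈ Finset.Icc 2 k, θ i * (t i - t (i - 1))) :
    (∀ k j, 1 ≤ k → k ≤ K → 1 ≤ j → j ≤ K →
      θ k * t k - p k ≥ θ k * t j - p j) ∧
    (∀ k, 1 ≤ k → k ≤ K → θ k * t k - p k ≥ 0) :=
  pstar_feasible_general K θ t p hθmono ht0 htmono hpdef
end

section
/- Given fixed time allocations 0 ≤ t_1 ≤ ... ≤ t_K, any feasible contract {(p_k,t_k)} satisfies p_k ≤ p_k* for every k, where p_1* = θ_1 t_1 and p_k* = θ_1 t_1 + Σ_{i=2}^k θ_i (t_i − t_{i−1}). Hence the p_k* maximize the total relay power Σ_k N_k p_k among all feasible contracts with these time allocations. -/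
open Finset

/-! Only the downward local incentive constraints matter: type `k + 1` must not prefer the
contract of type `k`, so `p (k + 1) - p k ≤ θ (k + 1) * (t (k + 1) - t k)`, and individual
rationality of type `1` gives `p 1 ≤ θ 1 * t 1`. Telescoping these bounds yields `p k ≤ p* k`,
and the bound on total power follows since the weights are nonnegative. -/

def pstar (θ t : ℕ → ℝ) (k : ℕ) : ℝ :=
  θ 1 * t 1 + ∑ i ∈ Icc 2 k, θ i * (t i - t (i - 1))

lemma pstar_succ (θ t : ℕ → ℝ) {n : ℕ} (hn : 1 ≤ n) :
    pstar θ t (n + 1) = pstar θ t n + θ (n + 1) * (t (n + 1) - t n) := by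
  rw [pstar, pstar, sum_Icc_succ_top (by omega), Nat.add_sub_cancel, add_assoc]

lemma le_pstar_of_local_downward {K : ℕ} {θ t p : ℕ → ℝ} (hbase : p 1 ≤ θ 1 * t 1)
    (hstep : ∀ n, 1 ≤ n → n < K → p (n + 1) - p n ≤ θ (n + 1) * (t (n + 1) - t n)) :
    ∀ k, 1 ≤ k → k ≤ K → p k ≤ pstar θ t k := by
  intro k hk
  induction k, hk using Nat.le_induction with
  | base =>
    intro _
    simpa [pstar] using hbase
  | succ n hn ih =>
    intro hnK
    rw [pstar_succ θ t hn]
    linarith [ih (by omega), hstep n hn hnK]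

theorem pstar_maximal_general
    (K : ℕ) (θ t p N : ℕ → ℝ)
    (hN : ∀ k, 1 ≤ k → k ≤ K → 1 ≤ N k)
    (hIC : ∀ k j, 1 ≤ k → k ≤ K → 1 ≤ j → j ≤ K →
      θ k * t k - p k ≥ θ k * t j - p j)
    (hIR : ∀ k, 1 ≤ k → k ≤ K → θ k * t k - p k ≥ 0) :
    (∀ k, 1 ≤ k → k ≤ K →
      p k ≤ θ 1 * t 1 + ∑ i ∈ Finset.Icc 2 k, θ i * (t i - t (i - 1))) ∧
    (∑ k ∈ Finset.Icc 1 K, N k * p k ≤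
      ∑ k ∈ Finset.Icc 1 K,
        N k * (θ 1 * t 1 + ∑ i ∈ Finset.Icc 2 k, θ i * (t i - t (i - 1)))) := by
  have hle : ∀ k, 1 ≤ k → k ≤ K → p k ≤ pstar θ t k := fun k hk hkK =>
    le_pstar_of_local_downward (by linarith [hIR 1 le_rfl (hk.trans hkK)])
      (fun n hn hnK => by linarith [hIC (n + 1) n (by omega) hnK hn hnK.le]) k hk hkK
  refine ⟨hle, sum_le_sum fun k hk => ?_⟩
  obtain ⟨hk1, hkK⟩ := mem_Icc.mp hk
  exact mul_le_mul_of_nonneg_left (hle k hk1 hkK) (zero_le_one.trans (hN k hk1 hkK))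

/-- Given fixed monotone time allocations, any feasible contract satisfies
`p k ≤ p* k` for every `k`, hence the `p* k` maximize total relay power. -/
theorem pstar_maximal
    (K : ℕ) (hK : 1 ≤ K) (θ t p N : ℕ → ℝ)
    (hθpos : ∀ k, 1 ≤ k → k ≤ K → 0 < θ k)
    (hθmono : ∀ i j, 1 ≤ i → i < j → j ≤ K → θ i < θ j)
    (hN : ∀ k, 1 ≤ k → k ≤ K → 1 ≤ N k)
    (ht0 : 0 ≤ t 1)
    (htmono : ∀ i j, 1 ≤ i → i ≤ j → j ≤ K → t i ≤ t j)
    (hp : ∀ k, 1 ≤ k → k ≤ K → 0 ≤ p k)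
    (hIC : ∀ k j, 1 ≤ k → k ≤ K → 1 ≤ j → j ≤ K →
      θ k * t k - p k ≥ θ k * t j - p j)
    (hIR : ∀ k, 1 ≤ k → k ≤ K → θ k * t k - p k ≥ 0) :
    (∀ k, 1 ≤ k → k ≤ K →
      p k ≤ θ 1 * t 1 + ∑ i ∈ Finset.Icc 2 k, θ i * (t i - t (i - 1))) ∧
    (∑ k ∈ Finset.Icc 1 K, N k * p k ≤
      ∑ k ∈ Finset.Icc 1 K,
        N k * (θ 1 * t 1 + ∑ i ∈ Finset.Icc 2 k, θ i * (t i - t (i - 1)))) :=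
  pstar_maximal_general K θ t p N hN hIC hIR
end

section
/- Let T*(θ) > 0 satisfy the first-order condition F(θ,T*) := θ(1+T*) − (1+θT*)·log(1+θT*) = 0 with θ > 0. Then 1 − T*·log(1+θT*) < 0, and consequently ∂F/∂θ = 1 − T*·log(1+θT*) < 0 and ∂F/∂T* = −θ·log(1+θT*) < 0, so dT*/dθ = −(∂F/∂θ)/(∂F/∂T*) < 0: the optimal total time allocation is strictly decreasing in the highest type θ. -/
/-! Writing `L = log (1 + θT)`, the first-order condition rearranges to
`θ (1 - T L) = L - θT`, which is negative because `log (1 + x) < x` for `x > 0`. -/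

open Real

lemma Real.log_one_add_lt_self {x : ℝ} (hx : 0 < x) : log (1 + x) < x := by
  have := log_lt_sub_one_of_pos (by linarith : 0 < 1 + x) (by linarith)
  linarith

lemma mul_one_sub_mul_log_eq_of_foc {θ T : ℝ}
    (hFOC : θ * (1 + T) - (1 + θ * T) * log (1 + θ * T) = 0) :
    θ * (1 - T * log (1 + θ * T)) = log (1 + θ * T) - θ * T := by
  linear_combination hFOC

lemma one_sub_mul_log_neg_of_foc {θ T : ℝ} (hθ : 0 < θ) (hT : 0 < T)
    (hFOC : θ * (1 + T) - (1 + θ * T) * log (1 + θ * T) = 0) :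
    1 - T * log (1 + θ * T) < 0 := by
  have hneg : θ * (1 - T * log (1 + θ * T)) < 0 := by
    rw [mul_one_sub_mul_log_eq_of_foc hFOC, sub_neg]
    exact log_one_add_lt_self (mul_pos hθ hT)
  exact neg_of_mul_neg_right hneg hθ.le

/-- If `T* > 0` satisfies the first-order condition
`θ(1+T*) = (1+θT*)·log(1+θT*)` with `θ > 0`, then
`1 - T*·log(1+θT*) < 0`, `-θ·log(1+θT*) < 0`, and
`dT*/dθ = -(1 - T*·log(1+θT*)) / (-θ·log(1+θT*)) < 0`. -/
theorem optimal_time_decreasing_in_type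
    (θ T : ℝ) (hθ : 0 < θ) (hT : 0 < T)
    (hFOC : θ * (1 + T) - (1 + θ * T) * Real.log (1 + θ * T) = 0) :
    1 - T * Real.log (1 + θ * T) < 0 ∧
    -(θ * Real.log (1 + θ * T)) < 0 ∧
    -((1 - T * Real.log (1 + θ * T)) / (-(θ * Real.log (1 + θ * T)))) < 0 := by
  have hFθ := one_sub_mul_log_neg_of_foc hθ hT hFOC
  have hFT : -(θ * log (1 + θ * T)) < 0 :=
    neg_neg_of_pos (mul_pos hθ (log_pos (lt_add_of_pos_right 1 (mul_pos hθ hT))))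
  exact ⟨hFθ, hFT, neg_neg_of_pos (div_pos_of_neg_of_neg hFθ hFT)⟩
end
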